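/- Let K be a field of characteristic 0, let Q ∈ K[x] be a nonzero polynomial and let α be a natural number. Then the set 𝓔_α(Q) is a subring of K(x)[[y]]: it contains 0 and 1, and for all A, B ∈ 𝓔_α(Q) one has A + B ∈ 𝓔_α(Q) and A·B ∈ 𝓔_α(Q). -/

import Mathlib

open Polynomial PowerSeries

/-- `𝓔_α(Q)`: the set of power series in `K(x)[[y]]` of the form
`Σ_n c_n(x) yⁿ / Q(x)ⁿ` with `deg c_n ≤ n·α`. -/
def Ecal (K : Type*) [Field K] (α : ℕ) (Q : Polynomial K) :
    Set (PowerSeries (RatFunc K)) :=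
  {A | ∃ c : ℕ → Polynomial K, (∀ n, (c n).natDegree ≤ n * α) ∧
    ∀ n, PowerSeries.coeff n A =
      algebraMap (Polynomial K) (RatFunc K) (c n) /
        (algebraMap (Polynomial K) (RatFunc K) Q) ^ n}

/-! Closure under products is the only point: the `n`-th coefficient of `A * B` is
`Σ_{i+j=n} (c_i / Qⁱ)(d_j / Qʲ) = (Σ_{i+j=n} c_i d_j) / Qⁿ`, and each `c_i d_j` has degree
at most `iα + jα = nα`. -/

open Finset

theorem natDegree_antidiagonal_sum_mul_le {R : Type*} [Semiring R] {α : ℕ} {c d : ℕ → R[X]}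
    (hc : ∀ n, (c n).natDegree ≤ n * α) (hd : ∀ n, (d n).natDegree ≤ n * α) (n : ℕ) :
    (∑ p ∈ antidiagonal n, c p.1 * d p.2).natDegree ≤ n * α := by
  refine natDegree_sum_le_of_forall_le _ _ fun p hp => ?_
  rw [← mem_antidiagonal.mp hp, add_mul]
  exact natDegree_mul_le_of_le (hc p.1) (hd p.2)

namespace Ecal

variable {K : Type*} [Field K] {α : ℕ} {Q : K[X]}

theorem zero_mem : (0 : PowerSeries (RatFunc K)) ∈ Ecal K α Q :=
  ⟨0, by simp, by simp⟩

theorem one_mem : (1 : PowerSeries (RatFunc K)) ∈ Ecal K α Q := by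
  refine ⟨fun n => if n = 0 then 1 else 0, fun n => ?_, fun n => ?_⟩ <;>
    by_cases hn : n = 0 <;> simp [hn, PowerSeries.coeff_one]

theorem add_mem {A B : PowerSeries (RatFunc K)} (hA : A ∈ Ecal K α Q) (hB : B ∈ Ecal K α Q) :
    A + B ∈ Ecal K α Q := by
  obtain ⟨c, hc, hcA⟩ := hA
  obtain ⟨d, hd, hdB⟩ := hB
  refine ⟨c + d, fun n => natDegree_add_le_of_degree_le (hc n) (hd n), fun n => ?_⟩
  rw [map_add, hcA, hdB, Pi.add_apply, map_add, add_div]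

theorem mul_mem {A B : PowerSeries (RatFunc K)} (hA : A ∈ Ecal K α Q) (hB : B ∈ Ecal K α Q) :
    A * B ∈ Ecal K α Q := by
  obtain ⟨c, hc, hcA⟩ := hA
  obtain ⟨d, hd, hdB⟩ := hB
  refine ⟨fun n => ∑ p ∈ antidiagonal n, c p.1 * d p.2,
    natDegree_antidiagonal_sum_mul_le hc hd, fun n => ?_⟩
  rw [PowerSeries.coeff_mul, map_sum, Finset.sum_div]
  refine Finset.sum_congr rfl fun p hp => ?_
  rw [hcA, hdB, map_mul, div_mul_div_comm, ← pow_add, mem_antidiagonal.mp hp]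

end Ecal

theorem Ecal_subring (K : Type*) [Field K]
    (Q : Polynomial K) (α : ℕ) :
    (0 : PowerSeries (RatFunc K)) ∈ Ecal K α Q ∧
    (1 : PowerSeries (RatFunc K)) ∈ Ecal K α Q ∧
    ∀ A B : PowerSeries (RatFunc K), A ∈ Ecal K α Q → B ∈ Ecal K α Q →
      A + B ∈ Ecal K α Q ∧ A * B ∈ Ecal K α Q :=
  ⟨Ecal.zero_mem, Ecal.one_mem, fun _ _ hA hB => ⟨Ecal.add_mem hA hB, Ecal.mul_mem hA hB⟩⟩
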